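/- For all x ≥ 0, 1 − e^{−x} ≤ x, and consequently for one-dimensional Gaussian measures ψ_a, ψ_b with means a, b and common variance β², the MMD with respect to the Gaussian kernel of bandwidth ζ satisfies ρ(ψ_a, ψ_b) ≤ |a − b| · (2/η)^{1/2} · (ζ/η)^{1/4}, where η = 4β² + ζ. -/

import Mathlib

open MeasureTheory Real

/-- Density of a 1-D Gaussian with mean `a` and variance `β²`. -/
noncomputable def gaussDensity (β a x : ℝ) : ℝ :=
  (2 * Real.pi * β ^ 2) ^ (-(1 : ℝ) / 2) * Real.exp (-(x - a) ^ 2 / (2 * β ^ 2))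

/-- Squared MMD between the Gaussians with means `a`, `b` and variance `β²`
with respect to the Gaussian kernel of bandwidth `ζ`. -/
noncomputable def gaussMMD2 (β ζ a b : ℝ) : ℝ :=
  (∫ x : ℝ, ∫ y : ℝ, Real.exp (-(x - y) ^ 2 / ζ) * gaussDensity β a x * gaussDensity β a y)
  + (∫ x : ℝ, ∫ y : ℝ, Real.exp (-(x - y) ^ 2 / ζ) * gaussDensity β b x * gaussDensity β b y)
  - 2 * ∫ x : ℝ, ∫ y : ℝ, Real.exp (-(x - y) ^ 2 / ζ) * gaussDensity β a x * gaussDensity β b y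

/-!
Every term of the squared MMD is a Gaussian integral: integrating the kernel against
`ψ_b` smooths it into a Gaussian of width `ζ + 2β²` centred at `b`, and integrating that
against `ψ_a` gives `(ζ/η)^{1/2} exp(-(a-b)²/η)`. Hence
`ρ² = 2 (ζ/η)^{1/2} (1 - exp(-(a-b)²/η))`, and `1 - e^{-x} ≤ x` bounds this by
`(a-b)² (2/η) (ζ/η)^{1/2}`.
-/

theorem integral_exp_neg_sq_div_mul_exp_neg_sq_div {p q : ℝ} (hp : 0 < p) (hq : 0 < q)
    (u v : ℝ) :
    ∫ x, exp (-(x - u) ^ 2 / p) * exp (-(x - v) ^ 2 / q)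
      = √(π * (p * q / (p + q))) * exp (-(u - v) ^ 2 / (p + q)) := by
  set s := (p + q) / (p * q) with hs
  set m := (q * u + p * v) / (p + q) with hm
  have complete_square : ∀ x, exp (-(x - u) ^ 2 / p) * exp (-(x - v) ^ 2 / q)
      = exp (-s * (x - m) ^ 2) * exp (-(u - v) ^ 2 / (p + q)) := by
    intro x
    rw [← exp_add, ← exp_add, hs, hm]
    congr 1
    field_simp
    ring
  have shifted_gaussian : ∫ x, exp (-s * (x - m) ^ 2) = √(π / s) := by
    rw [← integral_gaussian s]
    exact integral_sub_right_eq_self (fun x => exp (-s * x ^ 2)) m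
  simp_rw [complete_square]
  rw [integral_mul_const, shifted_gaussian, hs]
  congr 2
  field_simp

theorem integral_exp_neg_sq_div_mul_gaussDensity {β p : ℝ} (hβ : β ≠ 0) (hp : 0 < p)
    (b x : ℝ) :
    ∫ y, exp (-(y - x) ^ 2 / p) * gaussDensity β b y
      = √(p / (p + 2 * β ^ 2)) * exp (-(x - b) ^ 2 / (p + 2 * β ^ 2)) := by
  have hβ2 : 0 < 2 * β ^ 2 := by positivity
  have normalization : (2 * π * β ^ 2) ^ (-(1 : ℝ) / 2) = (√(2 * π * β ^ 2))⁻¹ := by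
    rw [neg_div, rpow_neg (by positivity), sqrt_eq_rpow]
  simp_rw [gaussDensity, normalization, mul_left_comm _ (√(2 * π * β ^ 2))⁻¹]
  rw [integral_const_mul, integral_exp_neg_sq_div_mul_exp_neg_sq_div hp hβ2, ← mul_assoc,
    inv_mul_eq_div, ← sqrt_div' _ (by positivity)]
  congr 2
  field_simp

theorem integral_integral_exp_neg_sq_div_mul_gaussDensity {β ζ : ℝ} (hβ : β ≠ 0)
    (hζ : 0 < ζ) (a b : ℝ) :
    ∫ x, ∫ y, exp (-(x - y) ^ 2 / ζ) * gaussDensity β a x * gaussDensity β b y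
      = √(ζ / (4 * β ^ 2 + ζ)) * exp (-(a - b) ^ 2 / (4 * β ^ 2 + ζ)) := by
  have inner : ∀ x, ∫ y, exp (-(x - y) ^ 2 / ζ) * gaussDensity β a x * gaussDensity β b y
      = √(ζ / (ζ + 2 * β ^ 2)) *
          (exp (-(x - b) ^ 2 / (ζ + 2 * β ^ 2)) * gaussDensity β a x) := by
    intro x
    calc _ = (∫ y, exp (-(y - x) ^ 2 / ζ) * gaussDensity β b y) * gaussDensity β a x := by
          rw [← integral_mul_const]
          congr with y
          rw [sub_sq_comm]
          ring
      _ = _ := by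
          rw [integral_exp_neg_sq_div_mul_gaussDensity hβ hζ]
          ring
  simp_rw [inner]
  rw [integral_const_mul, integral_exp_neg_sq_div_mul_gaussDensity hβ (by positivity),
    ← mul_assoc, ← sqrt_mul (by positivity)]
  congr 2
  · field_simp
    ring
  · ring

theorem gaussMMD2_eq {β ζ : ℝ} (hβ : β ≠ 0) (hζ : 0 < ζ) (a b : ℝ) :
    gaussMMD2 β ζ a b
      = 2 * √(ζ / (4 * β ^ 2 + ζ)) * (1 - exp (-(a - b) ^ 2 / (4 * β ^ 2 + ζ))) := by
  simp only [gaussMMD2, integral_integral_exp_neg_sq_div_mul_gaussDensity hβ hζ, sub_self]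
  norm_num
  ring

theorem gaussMMD2_le {β ζ : ℝ} (hβ : β ≠ 0) (hζ : 0 < ζ) (a b : ℝ) :
    gaussMMD2 β ζ a b
      ≤ (a - b) ^ 2 * (2 / (4 * β ^ 2 + ζ)) * √(ζ / (4 * β ^ 2 + ζ)) := by
  set η := 4 * β ^ 2 + ζ
  have linearized : 1 - exp (-(a - b) ^ 2 / η) ≤ (a - b) ^ 2 / η := by
    rw [neg_div, sub_le_comm]
    exact one_sub_le_exp_neg _
  calc gaussMMD2 β ζ a b = 2 * √(ζ / η) * (1 - exp (-(a - b) ^ 2 / η)) := gaussMMD2_eq hβ hζ a b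
    _ ≤ 2 * √(ζ / η) * ((a - b) ^ 2 / η) := by gcongr
    _ = (a - b) ^ 2 * (2 / η) * √(ζ / η) := by ring

/-- `1 − e^{−x} ≤ x` for `x ≥ 0`, and the resulting Lipschitz-type bound on the
MMD between equal-variance Gaussians: with `η = 4β² + ζ`,
`ρ(ψ_a, ψ_b) ≤ |a − b|·(2/η)^{1/2}·(ζ/η)^{1/4}`. -/
theorem stmt_14 (β ζ a b : ℝ) (hβ : 0 < β) (hζ : 0 < ζ) :
    (∀ x : ℝ, 0 ≤ x → 1 - Real.exp (-x) ≤ x) ∧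
      Real.sqrt (gaussMMD2 β ζ a b)
        ≤ |a - b| * (2 / (4 * β ^ 2 + ζ)) ^ ((1 : ℝ) / 2) *
            (ζ / (4 * β ^ 2 + ζ)) ^ ((1 : ℝ) / 4) := by
  refine ⟨fun x _ => sub_le_comm.mp (one_sub_le_exp_neg x), ?_⟩
  set η := 4 * β ^ 2 + ζ
  have hη : 0 < η := by positivity
  calc √(gaussMMD2 β ζ a b) ≤ √((a - b) ^ 2 * (2 / η) * √(ζ / η)) :=
        sqrt_le_sqrt (gaussMMD2_le hβ.ne' hζ a b)
    _ = |a - b| * (2 / η) ^ ((1 : ℝ) / 2) * (ζ / η) ^ ((1 : ℝ) / 4) := by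
        rw [sqrt_mul (by positivity), sqrt_mul (sq_nonneg _), sqrt_sq_eq_abs, sqrt_eq_rpow,
          sqrt_eq_rpow, sqrt_eq_rpow, ← rpow_mul (by positivity)]
        norm_num
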